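/- For every real ν ≥ 1/2, the function h_ν is differentiable on (0,1) and its derivative at every t ∈ (0,1) equals −f_ν^{-1}(t). -/

import Mathlib

open MeasureTheory Real Filter Set
open scoped ENNReal NNReal Topology

noncomputable section

/-- The modified Bessel function of the first kind `I_ν(t)`. -/
def besselI (ν t : ℝ) : ℝ :=
  ∑' m : ℕ, (t / 2) ^ (2 * (m : ℝ) + ν) / ((m.factorial : ℝ) * Real.Gamma ((m : ℝ) + ν + 1))

/-- The ratio `f_ν(t) = I_ν(t) / I_{ν-1}(t)`. -/
def besselRatio (ν t : ℝ) : ℝ := besselI ν t / besselI (ν - 1) t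

/-- The inverse `f_ν⁻¹ : (0,1) → (0,∞)` of the strictly increasing bijection
`f_ν : (0,∞) → (0,1)`. -/
def besselRatioInv (ν y : ℝ) : ℝ := Function.invFunOn (besselRatio ν) (Set.Ioi 0) y

/-- The function `ξ_ν(t) = -t f_ν(t) + log((2π)^ν I_{ν-1}(t) / t^{ν-1})`. -/
def xiFun (ν t : ℝ) : ℝ :=
  -t * besselRatio ν t + Real.log ((2 * π) ^ ν * besselI (ν - 1) t / t ^ (ν - 1))

/-- The function `h_ν(t) = ξ_ν(f_ν⁻¹(t))`, for `t ∈ (0,1)`. -/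
def hFun (ν t : ℝ) : ℝ := xiFun ν (besselRatioInv ν t)

/-- Surface area of the unit `(n-1)`-sphere in `ℝⁿ`: `S_{n-1} = 2 π^{n/2} / Γ(n/2)`. -/
def surfaceArea (n : ℕ) : ℝ := 2 * π ^ ((n : ℝ) / 2) / Real.Gamma ((n : ℝ) / 2)

/-- `n`-dimensional Euclidean space. -/
abbrev EucSp (n : ℕ) := EuclideanSpace ℝ (Fin n)

/-- The uniform (normalized rotation-invariant) probability distribution on the sphere
`S^{n-1}(R) = {x ∈ ℝⁿ : ‖x‖ = R}`; for `R = 0` it is the point mass at the origin. -/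
def sphereUniform (n : ℕ) (R : ℝ) : Measure (EucSp n) :=
  ((volume : Measure (EucSp n)).toSphere Set.univ)⁻¹ •
    Measure.map (fun x : Metric.sphere (0 : EucSp n) 1 => R • (x : EucSp n))
      (volume : Measure (EucSp n)).toSphere

/-- Kullback-Leibler divergence `KL(μ‖ν)`, with value `∞` unless `μ ≪ ν` and the
log-likelihood ratio is `μ`-integrable. -/
def klDiv {Ω : Type*} [MeasurableSpace Ω] (μ ν : Measure Ω) : ℝ≥0∞ :=
  open scoped Classical in
  if μ ≪ ν ∧ Integrable (llr μ ν) μ then ENNReal.ofReal (∫ x, llr μ ν x ∂μ) else ⊤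

/-- The rate-distortion function `R_n(D;R)` of the uniform distribution on `S^{n-1}(R)`
under squared error distortion: the infimum of the mutual information `I(X̂;X)` over all
joint laws `π` of pairs `(X̂, X)` of `ℝⁿ`-valued random vectors such that `X ∼ μ_R` and
`E[‖X̂ - X‖²] ≤ D`. -/
def rateDistortion (n : ℕ) (D R : ℝ) : ℝ≥0∞ :=
  ⨅ (P : Measure (EucSp n × EucSp n)) (_ : IsProbabilityMeasure P)
    (_ : Measure.map Prod.snd P = sphereUniform n R)
    (_ : ∫⁻ y, ENNReal.ofReal (‖y.1 - y.2‖ ^ (2:ℕ)) ∂P ≤ ENNReal.ofReal D),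
    klDiv P ((Measure.map Prod.fst P).prod (Measure.map Prod.snd P))



section BesselAux

/-- Coefficient of the auxiliary Bessel-type power series. -/
def gTerm (q : ℝ) (m : ℕ) : ℝ := 1 / (m.factorial * Real.Gamma (m + q))

/-- `besselG q x = ∑ x^m / (m! Γ(m+q))`. -/
def besselG (q x : ℝ) : ℝ := ∑' m : ℕ, x ^ m * gTerm q m

lemma gTerm_pos {q : ℝ} (hq : 0 < q) (m : ℕ) : 0 < gTerm q m := by
  have h1 : (0:ℝ) < m.factorial := by exact_mod_cast m.factorial_pos
  have h2 : 0 < Real.Gamma (m + q) := Real.Gamma_pos_of_pos (by positivity)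
  exact div_pos one_pos (by positivity)

lemma gTerm_succ_index {q : ℝ} (hq : 0 < q) (m : ℕ) :
    gTerm q m = (m + q) * gTerm (q + 1) m := by
  have h : Real.Gamma (m + (q + 1)) = (m + q) * Real.Gamma (m + q) := by
    have := Real.Gamma_add_one (s := (m : ℝ) + q) (by positivity)
    rw [← this]; ring_nf
  have h2 : 0 < Real.Gamma (m + q) := Real.Gamma_pos_of_pos (by positivity)
  have h1 : (0:ℝ) < m.factorial := by exact_mod_cast m.factorial_pos
  have hmq : (0:ℝ) < m + q := by positivity
  unfold gTerm
  rw [h]; field_simp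

lemma gTerm_succ {q : ℝ} (hq : 0 < q) (m : ℕ) :
    gTerm q (m + 1) = gTerm q m / ((m + 1) * (m + q)) := by
  have h : Real.Gamma ((m:ℝ) + 1 + q) = (m + q) * Real.Gamma (m + q) := by
    have := Real.Gamma_add_one (s := (m : ℝ) + q) (by positivity)
    rw [← this]; ring_nf
  have h2 : 0 < Real.Gamma (m + q) := Real.Gamma_pos_of_pos (by positivity)
  have h1 : (0:ℝ) < m.factorial := by exact_mod_cast m.factorial_pos
  have hmq : (0:ℝ) < m + q := by positivity
  unfold gTerm
  rw [Nat.factorial_succ]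
  push_cast
  rw [h]
  field_simp

lemma summable_besselG {q : ℝ} (hq : 0 < q) (x : ℝ) :
    Summable (fun m : ℕ => x ^ m * gTerm q m) := by
  rcases eq_or_ne x 0 with rfl | hx
  · apply summable_of_ne_finset_zero (s := {0})
    intro m hm
    simp only [Finset.mem_singleton] at hm
    rw [zero_pow hm, zero_mul]
  · apply summable_of_ratio_test_tendsto_lt_one (l := 0) one_pos
    · filter_upwards with m
      exact mul_ne_zero (pow_ne_zero _ hx) (ne_of_gt (gTerm_pos hq m))
    · have key : ∀ m : ℕ, ‖x ^ (m+1) * gTerm q (m+1)‖ / ‖x ^ m * gTerm q m‖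
          = |x| / (((m:ℝ) + 1) * ((m:ℝ) + q)) := by
        intro m
        have hg := gTerm_pos hq m
        have hmq : (0:ℝ) < (m:ℝ) + q := by positivity
        have hm1 : (0:ℝ) < (m:ℝ) + 1 := by positivity
        rw [gTerm_succ hq m, norm_mul, norm_mul, norm_pow, norm_pow,
          Real.norm_eq_abs, Real.norm_eq_abs, Real.norm_eq_abs, abs_of_pos hg,
          abs_of_pos (div_pos hg (by positivity)), pow_succ]
        have hxm : (0:ℝ) < |x| ^ m := pow_pos (abs_pos.mpr hx) m
        field_simp
      simp_rw [key]
      apply Tendsto.div_atTop tendsto_const_nhds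
      have h1 : Tendsto (fun m : ℕ => (m:ℝ) + 1) atTop atTop :=
        tendsto_atTop_add_const_right _ _ (tendsto_natCast_atTop_atTop)
      have h2 : Tendsto (fun m : ℕ => (m:ℝ) + q) atTop atTop :=
        tendsto_atTop_add_const_right _ _ (tendsto_natCast_atTop_atTop)
      exact h1.atTop_mul_atTop₀ h2

lemma besselG_pos {q x : ℝ} (hq : 0 < q) (hx : 0 ≤ x) : 0 < besselG q x := by
  have hterm : ∀ m : ℕ, 0 ≤ x ^ m * gTerm q m :=
    fun m => mul_nonneg (pow_nonneg hx m) (gTerm_pos hq m).le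
  apply Summable.tsum_pos (summable_besselG hq x) hterm 0
  simpa using gTerm_pos hq 0

/-- Falling factorial product `x (x-1) ⋯ (x-k+1)`. -/
def dP (x : ℝ) (k : ℕ) : ℝ := ∏ j ∈ Finset.range k, (x - j)

lemma dP_zero (x : ℝ) : dP x 0 = 1 := by simp [dP]

lemma dP_succ (x : ℝ) (k : ℕ) : dP x (k+1) = dP x k * (x - k) := by
  simp [dP, Finset.prod_range_succ]

lemma dP_succ_left (x : ℝ) (k : ℕ) : dP x (k+1) = dP (x-1) k * x := by
  unfold dP
  rw [Finset.prod_range_succ']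
  congr 1
  · apply Finset.prod_congr rfl
    intro i _
    push_cast; ring
  · simp

lemma dP_pos {x : ℝ} {k : ℕ} (h : ∀ j : ℕ, j < k → 0 < x - j) : 0 < dP x k :=
  Finset.prod_pos (fun j hj => h j (Finset.mem_range.mp hj))

lemma dP_vandermonde (n : ℕ) : ∀ x y : ℝ,
    ∑ k ∈ Finset.range (n+1), (n.choose k : ℝ) * dP x k * dP y (n-k) = dP (x+y) n := by
  induction n with
  | zero => intro x y; simp [dP]
  | succ n ih =>
    intro x y
    rw [Finset.sum_range_succ']
    have hf0 : ((n+1).choose 0 : ℝ) * dP x 0 * dP y (n+1-0) = dP y (n+1) := by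
      simp [dP_zero]
    rw [hf0]
    have hsplit : ∀ k ∈ Finset.range (n+1),
        ((n+1).choose (k+1) : ℝ) * dP x (k+1) * dP y (n+1-(k+1))
        = (n.choose k : ℝ) * dP x (k+1) * dP y (n-k)
          + (n.choose (k+1) : ℝ) * dP x (k+1) * dP y (n-k) := by
      intro k _
      rw [Nat.choose_succ_succ, Nat.succ_sub_succ]
      push_cast; ring
    rw [Finset.sum_congr rfl hsplit, Finset.sum_add_distrib]
    -- second sum plus dP y (n+1) equals ∑_{k ∈ range (n+1)} choose n k * dP x k * dP y (n+1-k)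
    have hB : (∑ k ∈ Finset.range (n+1), (n.choose (k+1) : ℝ) * dP x (k+1) * dP y (n-k))
        + dP y (n+1)
        = ∑ k ∈ Finset.range (n+1), (n.choose k : ℝ) * dP x k * dP y (n+1-k) := by
      rw [Finset.sum_range_succ' (fun k => (n.choose k : ℝ) * dP x k * dP y (n+1-k)) n]
      congr 1
      · rw [Finset.sum_range_succ]
        simp only [Nat.choose_succ_self, Nat.cast_zero, zero_mul]
        rw [add_zero]
        apply Finset.sum_congr rfl
        intro k _
        rw [Nat.succ_sub_succ]
      · simp [dP_zero]
    rw [add_assoc, hB]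
    have hA : ∀ k ∈ Finset.range (n+1),
        (n.choose k : ℝ) * dP x (k+1) * dP y (n-k)
        = ((n.choose k : ℝ) * dP x k * dP y (n-k)) * (x - k) := by
      intro k _
      rw [dP_succ]; ring
    have hC : ∀ k ∈ Finset.range (n+1),
        (n.choose k : ℝ) * dP x k * dP y (n+1-k)
        = ((n.choose k : ℝ) * dP x k * dP y (n-k)) * (y - (n-k : ℕ)) := by
      intro k hk
      have hkn : k ≤ n := Nat.lt_succ_iff.mp (Finset.mem_range.mp hk)
      have : n + 1 - k = (n - k) + 1 := by omega
      rw [this, dP_succ]; ring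
    rw [Finset.sum_congr rfl hA, Finset.sum_congr rfl hC, ← Finset.sum_add_distrib]
    have hD : ∀ k ∈ Finset.range (n+1),
        ((n.choose k : ℝ) * dP x k * dP y (n-k)) * (x - k)
          + ((n.choose k : ℝ) * dP x k * dP y (n-k)) * (y - (n-k : ℕ))
        = ((n.choose k : ℝ) * dP x k * dP y (n-k)) * (x + y - n) := by
      intro k hk
      have hkn : k ≤ n := Nat.lt_succ_iff.mp (Finset.mem_range.mp hk)
      have hcast : ((n - k : ℕ) : ℝ) = (n : ℝ) - k := by
        rw [Nat.cast_sub hkn]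
      rw [hcast]; ring
    rw [Finset.sum_congr rfl hD, ← Finset.sum_mul, ih x y, ← dP_succ]

lemma deriv_term_shift {q : ℝ} (hq : 0 < q) (y : ℝ) (m : ℕ) :
    ((m+1 : ℕ) : ℝ) * y ^ ((m+1) - 1) * gTerm q (m+1) = y ^ m * gTerm (q+1) m := by
  rw [gTerm_succ hq m, gTerm_succ_index hq m]
  have hmq : (0:ℝ) < (m:ℝ) + q := by positivity
  have hm1 : (0:ℝ) < (m:ℝ) + 1 := by positivity
  simp only [Nat.add_sub_cancel]
  push_cast
  field_simp

lemma summable_deriv_term {q : ℝ} (hq : 0 < q) (y : ℝ) :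
    Summable (fun m : ℕ => (m : ℝ) * y ^ (m - 1) * gTerm q m) := by
  rw [← summable_nat_add_iff 1]
  have : (fun m : ℕ => ((m+1 : ℕ) : ℝ) * y ^ ((m+1) - 1) * gTerm q (m+1))
      = fun m : ℕ => y ^ m * gTerm (q+1) m := funext fun m => deriv_term_shift hq y m
  rw [this]
  exact summable_besselG (by positivity) y

lemma tsum_deriv_term {q : ℝ} (hq : 0 < q) (y : ℝ) :
    ∑' m : ℕ, (m : ℝ) * y ^ (m - 1) * gTerm q m = besselG (q+1) y := by
  rw [Summable.tsum_eq_zero_add (summable_deriv_term hq y)]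
  simp only [Nat.cast_zero, zero_mul, zero_add]
  exact tsum_congr (deriv_term_shift hq y)

lemma hasDerivAt_besselG {q : ℝ} (hq : 0 < q) {x : ℝ} (hx : 0 < x) :
    HasDerivAt (fun y => besselG q y) (besselG (q+1) x) x := by
  have key : HasDerivAt (fun y => besselG q y)
      (∑' m : ℕ, (m : ℝ) * x ^ (m - 1) * gTerm q m) x := by
    apply hasDerivAt_of_tendstoUniformlyOn (l := atTop)
      (g' := fun y => ∑' m : ℕ, (m : ℝ) * y ^ (m - 1) * gTerm q m)
      (f := fun (N : ℕ) y =>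
        ∑ m ∈ Finset.range N, y ^ m * gTerm q m)
      (f' := fun (N : ℕ) y => ∑ m ∈ Finset.range N, (m : ℝ) * y ^ (m - 1) * gTerm q m)
      (s := Ioo (-(x+1)) (x+1)) isOpen_Ioo
    · apply tendstoUniformlyOn_tsum_nat
        (u := fun m : ℕ => (m : ℝ) * (x+1) ^ (m - 1) * gTerm q m)
      · exact summable_deriv_term hq (x+1)
      · intro m y hy
        have hy1 : |y| ≤ x + 1 := by
          rw [abs_le]; exact ⟨(hy.1).le, (hy.2).le⟩
        rw [Real.norm_eq_abs, abs_mul, abs_mul, abs_pow,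
          abs_of_nonneg (by positivity : (0:ℝ) ≤ (m:ℝ)), abs_of_pos (gTerm_pos hq m)]
        gcongr <;> first
          | exact (gTerm_pos hq m).le
          | exact abs_nonneg y
          | exact hy1
    · filter_upwards with N y _
      apply HasDerivAt.fun_sum
      intro m _
      simpa [mul_assoc] using (hasDerivAt_pow m y).mul_const (gTerm q m)
    · intro y _
      exact (summable_besselG hq y).hasSum.tendsto_sum_nat
    · constructor <;> [linarith; linarith]
  rwa [tsum_deriv_term hq x] at key

lemma besselG_rec {q : ℝ} (hq : 0 < q) (x : ℝ) :
    besselG q x = q * besselG (q+1) x + x * besselG (q+2) x := by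
  have h1 : ∀ m : ℕ, x ^ m * gTerm q m
      = q * (x ^ m * gTerm (q+1) m) + (m:ℝ) * x ^ m * gTerm (q+1) m := by
    intro m
    rw [gTerm_succ_index hq m]; ring
  have hs1 : Summable (fun m : ℕ => q * (x ^ m * gTerm (q+1) m)) :=
    (summable_besselG (by positivity) x).mul_left q
  have hs2 : Summable (fun m : ℕ => (m:ℝ) * x ^ m * gTerm (q+1) m) := by
    rw [← summable_nat_add_iff 1]
    have : (fun m : ℕ => ((m+1:ℕ):ℝ) * x ^ (m+1) * gTerm (q+1) (m+1))
        = fun m : ℕ => x * (x ^ m * gTerm (q+2) m) := by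
      funext m
      have := deriv_term_shift (by positivity : (0:ℝ) < q+1) x m
      simp only [Nat.add_sub_cancel] at this
      calc ((m+1:ℕ):ℝ) * x ^ (m+1) * gTerm (q+1) (m+1)
          = x * (((m+1:ℕ):ℝ) * x ^ m * gTerm (q+1) (m+1)) := by ring
        _ = x * (x ^ m * gTerm (q+1+1) m) := by rw [this]
        _ = x * (x ^ m * gTerm (q+2) m) := by rw [show q+1+1 = q+2 by ring]
    rw [this]
    exact (summable_besselG (by positivity) x).mul_left x
  have key : besselG q x = ∑' m, (q * (x ^ m * gTerm (q+1) m) + (m:ℝ) * x ^ m * gTerm (q+1) m) :=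
    tsum_congr h1
  rw [key, Summable.tsum_add hs1 hs2, tsum_mul_left]
  congr 1
  rw [Summable.tsum_eq_zero_add hs2]
  simp only [Nat.cast_zero, zero_mul, zero_add]
  unfold besselG
  rw [← tsum_mul_left]
  apply tsum_congr
  intro m
  have := deriv_term_shift (by positivity : (0:ℝ) < q+1) x m
  simp only [Nat.add_sub_cancel] at this
  calc ((m+1:ℕ):ℝ) * x ^ (m+1) * gTerm (q+1) (m+1)
      = x * (((m+1:ℕ):ℝ) * x ^ m * gTerm (q+1) (m+1)) := by ring
    _ = x * (x ^ m * gTerm (q+1+1) m) := by rw [this]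
    _ = x * (x ^ m * gTerm (q+2) m) := by rw [show q+1+1 = q+2 by ring]

lemma Gamma_eq_dP_mul {a : ℝ} (ha : 0 < a) (k : ℕ) :
    ∀ j : ℕ, Real.Gamma (a + k + j) = dP (a + k + j - 1) j * Real.Gamma (a + k) := by
  intro j
  induction j with
  | zero => simp [dP_zero]
  | succ j ih =>
    have hpos : (0:ℝ) < a + k + j := by positivity
    have h1 : (a:ℝ) + k + (j+1 : ℕ) = (a + k + j) + 1 := by push_cast; ring
    rw [h1, Real.Gamma_add_one (ne_of_gt hpos), ih,
      show a + (k:ℝ) + (j:ℝ) + 1 - 1 = (a + k + j - 1) + 1 by ring,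
      dP_succ_left,
      show a + (k:ℝ) + (j:ℝ) - 1 + 1 - 1 = a + k + j - 1 by ring,
      show a + (k:ℝ) + (j:ℝ) - 1 + 1 = a + k + j by ring]
    ring

/-- The key Chu–Vandermonde consequence: closed form for the Cauchy coefficient. -/
lemma gTerm_cauchy (q r : ℝ) (hq : 0 < q) (hr : 0 < r) (n : ℕ) :
    ∑ k ∈ Finset.range (n+1), gTerm q k * gTerm r (n-k)
      = dP (q + r + 2*n - 2) n / (n.factorial * Real.Gamma (q + n) * Real.Gamma (r + n)) := by
  have hΓq : ∀ m : ℕ, 0 < Real.Gamma (q + m) := fun m => Real.Gamma_pos_of_pos (by positivity)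
  have hΓr : ∀ m : ℕ, 0 < Real.Gamma (r + m) := fun m => Real.Gamma_pos_of_pos (by positivity)
  have hfac : ∀ m : ℕ, (0:ℝ) < m.factorial := fun m => by exact_mod_cast m.factorial_pos
  rw [eq_div_iff (by positivity)]
  have key : ∀ k ∈ Finset.range (n+1),
      gTerm q k * gTerm r (n-k) * ((n.factorial : ℝ) * Real.Gamma (q + n) * Real.Gamma (r + n))
      = (n.choose k : ℝ) * dP (r + n - 1) k * dP (q + n - 1) (n-k) := by
    intro k hk
    have hkn : k ≤ n := Nat.lt_succ_iff.mp (Finset.mem_range.mp hk)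
    -- Γ(q+n) = dP (q+n-1) (n-k) * Γ(q+k)
    have e1 : Real.Gamma (q + n) = dP (q + n - 1) (n-k) * Real.Gamma (q + k) := by
      have := Gamma_eq_dP_mul hq k (n - k)
      have hc : (q:ℝ) + k + ((n-k : ℕ):ℝ) = q + n := by
        rw [Nat.cast_sub hkn]; ring
      rw [hc] at this
      exact this
    have e2 : Real.Gamma (r + n) = dP (r + n - 1) k * Real.Gamma (r + ((n-k : ℕ) : ℝ)) := by
      have := Gamma_eq_dP_mul hr (n - k) k
      have hc : (r:ℝ) + ((n-k : ℕ):ℝ) + (k:ℝ) = r + n := by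
        rw [Nat.cast_sub hkn]; ring
      rw [hc] at this
      exact this
    have e3 : (n.choose k : ℝ) * k.factorial * (n-k).factorial = n.factorial := by
      exact_mod_cast congrArg (Nat.cast : ℕ → ℝ) (Nat.choose_mul_factorial_mul_factorial hkn)
    have hcast : ((n-k:ℕ):ℝ) = (n:ℝ) - k := Nat.cast_sub hkn
    have e2' : Real.Gamma (r + (n:ℝ)) = dP (r + n - 1) k * Real.Gamma (((n:ℝ) - k) + r) := by
      rw [e2, add_comm r ((n-k:ℕ):ℝ), hcast]
    have e1' : Real.Gamma (q + (n:ℝ)) = dP (q + n - 1) (n-k) * Real.Gamma ((k:ℝ) + q) := by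
      rw [e1, add_comm q (k:ℝ)]
    unfold gTerm
    rw [hcast, e1', e2', ← e3]
    have h4 : (0:ℝ) < Real.Gamma ((k:ℝ) + q) := Real.Gamma_pos_of_pos (by positivity)
    have hklen : (k:ℝ) ≤ n := Nat.cast_le.mpr hkn
    have h5 : (0:ℝ) < Real.Gamma (((n:ℝ) - k) + r) :=
      Real.Gamma_pos_of_pos (by linarith)
    have hfk : (0:ℝ) < k.factorial := hfac k
    have hfnk : (0:ℝ) < (n-k).factorial := hfac (n-k)
    field_simp
  rw [Finset.sum_mul, Finset.sum_congr rfl key, dP_vandermonde n (r + n - 1) (q + n - 1)]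
  congr 1
  ring

/-- Cauchy-product representation of `besselG q x * besselG r x`. -/
lemma besselG_mul_hasSum {q r : ℝ} (hq : 0 < q) (hr : 0 < r) {x : ℝ} (hx : 0 ≤ x) :
    HasSum (fun n : ℕ => x ^ n *
        (dP (q + r + 2*n - 2) n / (n.factorial * Real.Gamma (q + n) * Real.Gamma (r + n))))
      (besselG q x * besselG r x) := by
  have hnq : Summable (fun m : ℕ => ‖x ^ m * gTerm q m‖) := by
    have : (fun m : ℕ => ‖x ^ m * gTerm q m‖) = fun m => x ^ m * gTerm q m := by
      funext m
      rw [Real.norm_eq_abs, abs_of_nonneg (mul_nonneg (pow_nonneg hx m) (gTerm_pos hq m).le)]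
    rw [this]; exact summable_besselG hq x
  have hnr : Summable (fun m : ℕ => ‖x ^ m * gTerm r m‖) := by
    have : (fun m : ℕ => ‖x ^ m * gTerm r m‖) = fun m => x ^ m * gTerm r m := by
      funext m
      rw [Real.norm_eq_abs, abs_of_nonneg (mul_nonneg (pow_nonneg hx m) (gTerm_pos hr m).le)]
    rw [this]; exact summable_besselG hr x
  have h := hasSum_sum_range_mul_of_summable_norm hnq hnr
  have hfun : (fun n : ℕ => ∑ k ∈ Finset.range (n+1),
        (x ^ k * gTerm q k) * (x ^ (n-k) * gTerm r (n-k)))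
      = fun n : ℕ => x ^ n *
        (dP (q + r + 2*n - 2) n / (n.factorial * Real.Gamma (q + n) * Real.Gamma (r + n))) := by
    funext n
    rw [← gTerm_cauchy q r hq hr n, Finset.mul_sum]
    apply Finset.sum_congr rfl
    intro k hk
    have hkn : k ≤ n := Nat.lt_succ_iff.mp (Finset.mem_range.mp hk)
    have : x ^ k * x ^ (n-k) = x ^ n := by
      rw [← pow_add]
      congr 1
      omega
    calc (x ^ k * gTerm q k) * (x ^ (n-k) * gTerm r (n-k))
        = (x ^ k * x ^ (n-k)) * (gTerm q k * gTerm r (n-k)) := by ring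
      _ = x ^ n * (gTerm q k * gTerm r (n-k)) := by rw [this]
  rw [← hfun]
  exact h

/-- Cauchy coefficient of `besselG q x * besselG r x`. -/
def pc (q r x : ℝ) (n : ℕ) : ℝ :=
  x ^ n * (dP (q + r + 2*n - 2) n / (n.factorial * Real.Gamma (q + n) * Real.Gamma (r + n)))

lemma hasSum_pc {q r : ℝ} (hq : 0 < q) (hr : 0 < r) {x : ℝ} (hx : 0 ≤ x) :
    HasSum (pc q r x) (besselG q x * besselG r x) := besselG_mul_hasSum hq hr hx

lemma dP_arg_pos {q r : ℝ} (hq : 0 < q) (hr : 0 < r) (n : ℕ) :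
    0 < dP (q + r + 2*n - 2) n := by
  apply dP_pos
  intro j hj
  have hj1 : (j:ℝ) + 1 ≤ n := by exact_mod_cast Nat.succ_le_of_lt hj
  linarith

lemma pc_nonneg {q r x : ℝ} (hq : 0 < q) (hr : 0 < r) (hx : 0 ≤ x) (n : ℕ) :
    0 ≤ pc q r x n := by
  have h1 := dP_arg_pos hq hr n
  have h2 : 0 < Real.Gamma (q + n) := Real.Gamma_pos_of_pos (by positivity)
  have h3 : 0 < Real.Gamma (r + n) := Real.Gamma_pos_of_pos (by positivity)
  have h4 : (0:ℝ) < n.factorial := by exact_mod_cast n.factorial_pos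
  unfold pc
  positivity

lemma pc_zero_pos {q r x : ℝ} (hq : 0 < q) (hr : 0 < r) :
    0 < pc q r x 0 := by
  have h2 : 0 < Real.Gamma (q + (0:ℕ)) := Real.Gamma_pos_of_pos (by positivity)
  have h3 : 0 < Real.Gamma (r + (0:ℕ)) := Real.Gamma_pos_of_pos (by positivity)
  unfold pc
  rw [dP_zero]
  push_cast at *
  simp only [pow_zero, Nat.factorial_zero, Nat.cast_one, one_mul]
  positivity

/-- Termwise inequality for `x G_{ν+1}² ≤ G_ν² `. -/
lemma pc_sq_shift_le {ν x : ℝ} (hν : 1/2 ≤ ν) (hx : 0 < x) (n : ℕ) :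
    x * pc (ν+1) (ν+1) x n ≤ pc ν ν x (n+1) := by
  have hν0 : (0:ℝ) < ν := by linarith
  have hΓ : 0 < Real.Gamma (ν + 1 + n) := Real.Gamma_pos_of_pos (by positivity)
  have hfac : (0:ℝ) < n.factorial := by exact_mod_cast n.factorial_pos
  have hdP : 0 < dP (2*ν + 2*n) n := by
    have := dP_arg_pos (by linarith : (0:ℝ) < ν+1) (by linarith : (0:ℝ) < ν+1) n
    rwa [show ν+1+(ν+1)+2*(n:ℝ)-2 = 2*ν+2*(n:ℝ) by ring] at this
  have e1 : x * pc (ν+1) (ν+1) x n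
      = x^(n+1) * dP (2*ν+2*n) n / (n.factorial * Real.Gamma (ν+1+n) ^ 2) := by
    unfold pc
    rw [show ν+1+(ν+1)+2*(n:ℝ)-2 = 2*ν+2*(n:ℝ) by ring]
    rw [pow_succ]
    ring
  have e2 : pc ν ν x (n+1)
      = x^(n+1) * (dP (2*ν+2*n) n * (2*ν+n)) / (((n:ℝ)+1) * n.factorial * Real.Gamma (ν+1+n) ^ 2) := by
    unfold pc
    rw [show ν+ν+2*(((n+1):ℕ):ℝ)-2 = 2*ν+2*(n:ℝ) by push_cast; ring]
    rw [dP_succ, show 2*ν+2*(n:ℝ)-n = 2*ν+n by ring]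
    rw [show ν+(((n+1):ℕ):ℝ) = ν+1+(n:ℝ) by push_cast; ring]
    rw [Nat.factorial_succ]
    push_cast
    ring
  rw [e1, e2, div_le_div_iff₀ (by positivity) (by positivity)]
  have hxp : (0:ℝ) ≤ x^(n+1) := by positivity
  nlinarith [mul_nonneg (mul_nonneg hxp hdP.le) (mul_pos hfac (pow_pos hΓ 2)).le]

/-- `x G_{ν+1}(x)² < G_ν(x)²` for `ν ≥ 1/2`, `x > 0`. -/
lemma besselG_sq_lt {ν x : ℝ} (hν : 1/2 ≤ ν) (hx : 0 < x) :
    x * besselG (ν+1) x ^ 2 < besselG ν x ^ 2 := by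
  have hν0 : (0:ℝ) < ν := by linarith
  have hν1 : (0:ℝ) < ν + 1 := by linarith
  have hP : HasSum (pc ν ν x) (besselG ν x * besselG ν x) := hasSum_pc hν0 hν0 hx.le
  have hE : HasSum (fun n => x * pc (ν+1) (ν+1) x n)
      (x * (besselG (ν+1) x * besselG (ν+1) x)) :=
    (hasSum_pc hν1 hν1 hx.le).mul_left x
  have hshift : Summable (fun n => pc ν ν x (n+1)) := by
    rw [summable_nat_add_iff 1]
    exact hP.summable
  have hle : x * (besselG (ν+1) x * besselG (ν+1) x) ≤ ∑' n, pc ν ν x (n+1) := by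
    rw [← hE.tsum_eq]
    exact Summable.tsum_le_tsum (fun n => pc_sq_shift_le hν hx n) hE.summable hshift
  have hsum : ∑' n, pc ν ν x (n+1) = besselG ν x * besselG ν x - pc ν ν x 0 := by
    rw [← hP.tsum_eq, Summable.tsum_eq_zero_add hP.summable]
    ring
  have h0 : 0 < pc ν ν x 0 := pc_zero_pos hν0 hν0
  rw [pow_two, pow_two]
  linarith

/-- Termwise inequality for the positivity of `W`. -/
lemma pc_W_le {ν x : ℝ} (hν : 1/2 ≤ ν) (hx : 0 < x) (n : ℕ) :
    x * pc (ν+1) (ν+1) x n ≤ x * pc (ν+2) ν x n + (1/2) * pc (ν+1) ν x (n+1) := by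
  have hν0 : (0:ℝ) < ν := by linarith
  have hΓ0 : 0 < Real.Gamma (ν + n) := Real.Gamma_pos_of_pos (by positivity)
  have hfac : (0:ℝ) < n.factorial := by exact_mod_cast n.factorial_pos
  have hs : (0:ℝ) < ν + n := by positivity
  have hΓ1 : Real.Gamma (ν + 1 + n) = (ν + n) * Real.Gamma (ν + n) := by
    rw [show ν+1+(n:ℝ) = (ν+(n:ℝ))+1 by ring, Real.Gamma_add_one (ne_of_gt hs)]
  have hΓ2 : Real.Gamma (ν + 2 + n) = (ν + 1 + n) * ((ν + n) * Real.Gamma (ν + n)) := by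
    rw [show ν+2+(n:ℝ) = (ν+1+(n:ℝ))+1 by ring, Real.Gamma_add_one (by positivity), hΓ1]
  have hdP : 0 < dP (2*ν + 2*n) n := by
    have := dP_arg_pos (by linarith : (0:ℝ) < ν+1) (by linarith : (0:ℝ) < ν+1) n
    rwa [show ν+1+(ν+1)+2*(n:ℝ)-2 = 2*ν+2*(n:ℝ) by ring] at this
  have e1 : x * pc (ν+1) (ν+1) x n
      = x^(n+1) * dP (2*ν+2*n) n / (n.factorial * ((ν+n) * Real.Gamma (ν+n)) ^ 2) := by
    unfold pc
    rw [show ν+1+(ν+1)+2*(n:ℝ)-2 = 2*ν+2*(n:ℝ) by ring, hΓ1, pow_succ]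
    ring
  have e2 : x * pc (ν+2) ν x n
      = x^(n+1) * dP (2*ν+2*n) n / (n.factorial * ((ν+1+n) * ((ν+n) * Real.Gamma (ν+n)) * Real.Gamma (ν+n))) := by
    unfold pc
    rw [show ν+2+ν+2*(n:ℝ)-2 = 2*ν+2*(n:ℝ) by ring, hΓ2, pow_succ]
    ring
  have hΓne : Real.Gamma (ν+n) ≠ 0 := ne_of_gt hΓ0
  have hsne : (ν:ℝ) + n ≠ 0 := ne_of_gt hs
  have h1n : (0:ℝ) < ν + 1 + n := by positivity
  have h1ne : (ν:ℝ) + 1 + n ≠ 0 := ne_of_gt h1n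
  have hfne : (n.factorial : ℝ) ≠ 0 := ne_of_gt hfac
  have hdP3 : dP (ν+1+ν+2*(((n+1):ℕ):ℝ)-2) (n+1) = dP (2*ν+2*(n:ℝ)) n * (2*ν+2*(n:ℝ)+1) := by
    rw [show ν+1+ν+2*(((n+1):ℕ):ℝ)-2 = 2*ν+2*(n:ℝ)+1 by push_cast; ring, dP_succ_left,
      show 2*ν+2*(n:ℝ)+1-1 = 2*ν+2*(n:ℝ) by ring]
  have hΓa : Real.Gamma (ν+1+(((n+1):ℕ):ℝ)) = (ν+1+(n:ℝ)) * ((ν+(n:ℝ)) * Real.Gamma (ν+(n:ℝ))) := by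
    rw [show ν+1+(((n+1):ℕ):ℝ) = (ν+1+(n:ℝ))+1 by push_cast; ring,
      Real.Gamma_add_one (by positivity), hΓ1]
  have hΓb : Real.Gamma (ν+(((n+1):ℕ):ℝ)) = (ν+(n:ℝ)) * Real.Gamma (ν+(n:ℝ)) := by
    rw [show ν+(((n+1):ℕ):ℝ) = (ν+(n:ℝ))+1 by push_cast; ring, Real.Gamma_add_one (ne_of_gt hs)]
  have e3 : (1/2) * pc (ν+1) ν x (n+1)
      = x^(n+1) * (dP (2*ν+2*n) n * (2*ν+2*n+1)) /
        (2 * (((n:ℝ)+1) * n.factorial) * ((ν+1+n) * ((ν+n) * Real.Gamma (ν+n)) * ((ν+n) * Real.Gamma (ν+n)))) := by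
    unfold pc
    rw [hdP3, hΓa, hΓb, Nat.factorial_succ]
    push_cast
    field_simp
  have hA : (0:ℝ) ≤ x^(n+1) * dP (2*ν+2*n) n := by positivity
  have step1 : x * pc (ν+1) (ν+1) x n - x * pc (ν+2) ν x n
      = x^(n+1) * dP (2*ν+2*n) n /
        (n.factorial * ((ν+1+n) * ((ν+n) * Real.Gamma (ν+n)) ^ 2)) := by
    rw [e1, e2]
    field_simp
    ring
  have hDpos : (0:ℝ) < n.factorial * ((ν+1+n) * ((ν+n) * Real.Gamma (ν+n)) ^ 2) := by
    positivity
  have step2 : x^(n+1) * dP (2*ν+2*n) n /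
        (n.factorial * ((ν+1+n) * ((ν+n) * Real.Gamma (ν+n)) ^ 2))
      ≤ (1/2) * pc (ν+1) ν x (n+1) := by
    rw [e3, div_le_div_iff₀ (by positivity) (by positivity)]
    have h2ν : (0:ℝ) ≤ 2*ν - 1 := by linarith
    nlinarith [mul_nonneg (mul_nonneg hA hDpos.le) h2ν]
  linarith

lemma besselG_W_pos {ν x : ℝ} (hν : 1/2 ≤ ν) (hx : 0 < x) :
    x * besselG (ν+1) x ^ 2
      < 1/2 * (besselG (ν+1) x * besselG ν x) + x * (besselG (ν+2) x * besselG ν x) := by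
  have hν0 : (0:ℝ) < ν := by linarith
  have hν1 : (0:ℝ) < ν + 1 := by linarith
  have hν2 : (0:ℝ) < ν + 2 := by linarith
  have hc : HasSum (pc (ν+1) ν x) (besselG (ν+1) x * besselG ν x) := hasSum_pc hν1 hν0 hx.le
  have hd : HasSum (fun n => x * pc (ν+2) ν x n) (x * (besselG (ν+2) x * besselG ν x)) :=
    (hasSum_pc hν2 hν0 hx.le).mul_left x
  have he : HasSum (fun n => x * pc (ν+1) (ν+1) x n)
      (x * (besselG (ν+1) x * besselG (ν+1) x)) :=
    (hasSum_pc hν1 hν1 hx.le).mul_left x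
  have hshift : HasSum (fun n => pc (ν+1) ν x (n+1))
      (besselG (ν+1) x * besselG ν x - pc (ν+1) ν x 0) := by
    refine (hasSum_nat_add_iff (f := pc (ν+1) ν x) 1).mpr ?_
    simp only [Finset.range_one, Finset.sum_singleton]
    rw [sub_add_cancel]
    exact hc
  have hRHS : HasSum (fun n => x * pc (ν+2) ν x n + (1/2) * pc (ν+1) ν x (n+1))
      (x * (besselG (ν+2) x * besselG ν x)
        + (1/2) * (besselG (ν+1) x * besselG ν x - pc (ν+1) ν x 0)) :=
    hd.add (hshift.mul_left (1/2))
  have hle := hasSum_le (fun n => pc_W_le hν hx n) he hRHS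
  have h0 : 0 < pc (ν+1) ν x 0 := pc_zero_pos hν1 hν0
  rw [pow_two]
  linarith

lemma besselI_eq (ν : ℝ) {t : ℝ} (ht : 0 < t) :
    besselI ν t = (t/2) ^ ν * besselG (ν+1) (t^2/4) := by
  unfold besselI besselG gTerm
  rw [← tsum_mul_left]
  apply tsum_congr
  intro m
  have ht2 : (0:ℝ) < t/2 := by linarith
  have h1 : (t/2) ^ (2*(m:ℝ)+ν) = (t^2/4)^m * (t/2)^ν := by
    rw [Real.rpow_add ht2, show (2*(m:ℝ)) = ((2*m : ℕ) : ℝ) by push_cast; ring,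
      Real.rpow_natCast, pow_mul]
    congr 2
    ring
  rw [h1, show ((m:ℝ) + (ν+1)) = (m:ℝ) + ν + 1 by ring]
  ring

lemma besselI_pos {ν t : ℝ} (hν : -1 < ν) (ht : 0 < t) : 0 < besselI ν t := by
  rw [besselI_eq ν ht]
  have h1 : (0:ℝ) < (t/2) ^ ν := Real.rpow_pos_of_pos (by linarith) ν
  have h2 : 0 < besselG (ν+1) (t^2/4) := besselG_pos (by linarith) (by positivity)
  positivity

lemma besselI_rec {ν : ℝ} (hν : 0 < ν) {t : ℝ} (ht : 0 < t) :
    besselI (ν-1) t = besselI (ν+1) t + (2*ν/t) * besselI ν t := by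
  have ht2 : (0:ℝ) < t/2 := by linarith
  rw [besselI_eq (ν-1) ht, besselI_eq (ν+1) ht, besselI_eq ν ht,
    show ν-1+1 = ν by ring, show ν+1+1 = ν+2 by ring]
  rw [besselG_rec hν (t^2/4)]
  have e1 : (t/2) ^ (ν+1) = (t/2)^(ν-1) * (t^2/4) := by
    rw [show ν+1 = (ν-1) + 2 by ring, Real.rpow_add ht2, show (2:ℝ) = ((2:ℕ):ℝ) by norm_num,
      Real.rpow_natCast]
    congr 1
    rw [pow_two]
    ring
  have e2 : (2*ν/t) * (t/2)^ν = ν * (t/2)^(ν-1) := by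
    rw [show ν = (ν-1) + 1 by ring, Real.rpow_add ht2, Real.rpow_one]
    field_simp
    ring_nf
  rw [e1]
  linear_combination (-(besselG (ν+1) (t^2/4))) * e2

lemma hasDerivAt_besselI {ν : ℝ} (hν : 0 < ν + 1) {t : ℝ} (ht : 0 < t) :
    HasDerivAt (fun y => besselI ν y) (ν/t * besselI ν t + besselI (ν+1) t) t := by
  have ht2 : (0:ℝ) < t/2 := by linarith
  have h1 : HasDerivAt (fun y : ℝ => (y/2) ^ ν) (ν * (t/2)^(ν-1) * (1/2)) t := by
    have hb : HasDerivAt (fun y : ℝ => y/2) (1/2) t := (hasDerivAt_id t).div_const 2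
    exact (Real.hasDerivAt_rpow_const (p := ν) (Or.inl (ne_of_gt ht2))).comp t hb
  have h2 : HasDerivAt (fun y : ℝ => besselG (ν+1) (y^2/4))
      (besselG (ν+2) (t^2/4) * (t/2)) t := by
    have hb : HasDerivAt (fun y : ℝ => y^2/4) (t/2) t := by
      rw [show t/2 = 2*t/4 by ring]
      simpa using (hasDerivAt_pow 2 t).div_const 4
    have hg := hasDerivAt_besselG (by linarith : (0:ℝ) < ν+1) (by positivity : (0:ℝ) < t^2/4)
    have := hg.comp t hb
    rwa [show ν+1+1 = ν+2 by ring] at this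
  have hI : HasDerivAt (fun y => besselI ν y)
      ((ν * (t/2)^(ν-1) * (1/2)) * besselG (ν+1) (t^2/4)
        + (t/2)^ν * (besselG (ν+2) (t^2/4) * (t/2))) t := by
    have hmul := h1.mul h2
    apply hmul.congr_of_eventuallyEq
    filter_upwards [eventually_gt_nhds ht] with y hy
    exact besselI_eq ν hy
  have heq : (ν * (t/2)^(ν-1) * (1/2)) * besselG (ν+1) (t^2/4)
        + (t/2)^ν * (besselG (ν+2) (t^2/4) * (t/2))
      = ν/t * besselI ν t + besselI (ν+1) t := by
    rw [besselI_eq ν ht, besselI_eq (ν+1) ht, show ν+1+1 = ν+2 by ring]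
    have e1 : (t/2) ^ (ν+1) = (t/2)^ν * (t/2) := by
      rw [Real.rpow_add ht2, Real.rpow_one]
    have e2 : (ν/t) * (t/2)^ν = ν * (t/2)^(ν-1) * (1/2) := by
      rw [show ν = (ν-1) + 1 by ring, Real.rpow_add ht2, Real.rpow_one]
      field_simp
      ring_nf
    rw [e1]
    linear_combination (-(besselG (ν+1) (t^2/4))) * e2
  rwa [heq] at hI

lemma besselRatio_eq {ν t : ℝ} (hν : 1/2 ≤ ν) (ht : 0 < t) :
    besselRatio ν t = (t/2) * besselG (ν+1) (t^2/4) / besselG ν (t^2/4) := by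
  have ht2 : (0:ℝ) < t/2 := by linarith
  have hg0 : 0 < besselG ν (t^2/4) := besselG_pos (by linarith) (by positivity)
  have hC : (0:ℝ) < (t/2) ^ (ν-1) := Real.rpow_pos_of_pos ht2 _
  unfold besselRatio
  rw [besselI_eq ν ht, besselI_eq (ν-1) ht, show ν-1+1 = ν by ring,
    show ν = (ν-1)+1 by ring, Real.rpow_add ht2, Real.rpow_one,
    show ν-1+1-1 = ν-1 by ring, show ν-1+1+1 = ν+1 by ring]
  field_simp

lemma besselRatio_pos {ν t : ℝ} (hν : 1/2 ≤ ν) (ht : 0 < t) : 0 < besselRatio ν t :=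
  div_pos (besselI_pos (by linarith) ht) (besselI_pos (by linarith) ht)

lemma besselRatio_lt_one {ν t : ℝ} (hν : 1/2 ≤ ν) (ht : 0 < t) : besselRatio ν t < 1 := by
  have ht2 : (0:ℝ) < t/2 := by linarith
  have hx : (0:ℝ) < t^2/4 := by positivity
  have hg0 : 0 < besselG ν (t^2/4) := besselG_pos (by linarith) hx.le
  have hg1 : 0 < besselG (ν+1) (t^2/4) := besselG_pos (by linarith) hx.le
  rw [besselRatio_eq hν ht, div_lt_one hg0]
  have hsq := besselG_sq_lt hν hx
  nlinarith [mul_pos ht2 hg1]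

lemma besselRatio_succ_eq {ν t : ℝ} : besselRatio (ν+1) t = besselI (ν+1) t / besselI ν t := by
  unfold besselRatio
  rw [show ν+1-1 = ν by ring]

lemma besselRatio_lower {ν t : ℝ} (hν : 1/2 ≤ ν) (ht : 0 < t) :
    t/(2*ν+t) < besselRatio ν t := by
  have hu : 0 < besselI ν t := besselI_pos (by linarith) ht
  have hw : 0 < besselI (ν+1) t := besselI_pos (by linarith) ht
  have hv : 0 < besselI (ν-1) t := besselI_pos (by linarith) ht
  have hwu : besselI (ν+1) t < besselI ν t := by
    have h1 : besselRatio (ν+1) t < 1 := besselRatio_lt_one (by linarith) ht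
    rw [besselRatio_succ_eq, div_lt_one hu] at h1
    exact h1
  have hrec := besselI_rec (by linarith : (0:ℝ) < ν) ht
  unfold besselRatio
  rw [div_lt_div_iff₀ (by linarith) hv, hrec]
  have h2 : 0 < 2*ν/t := by positivity
  have h3 : (2*ν/t) * t = 2*ν := by field_simp
  nlinarith

lemma besselRatio_upper {ν t : ℝ} (hν : 1/2 ≤ ν) (ht : 0 < t) :
    besselRatio ν t < t/(2*ν) := by
  have hu : 0 < besselI ν t := besselI_pos (by linarith) ht
  have hw : 0 < besselI (ν+1) t := besselI_pos (by linarith) ht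
  have hv : 0 < besselI (ν-1) t := besselI_pos (by linarith) ht
  have hrec := besselI_rec (by linarith : (0:ℝ) < ν) ht
  unfold besselRatio
  rw [div_lt_div_iff₀ hv (by linarith)]
  have h3 : (2*ν/t) * t = 2*ν := by field_simp
  nlinarith

lemma hasDerivAt_besselRatio {ν t : ℝ} (hν : 1/2 ≤ ν) (ht : 0 < t) :
    HasDerivAt (besselRatio ν)
      (1 - besselRatio ν t ^ 2 - ((2*ν-1)/t) * besselRatio ν t) t := by
  have hu : 0 < besselI ν t := besselI_pos (by linarith) ht
  have hv : 0 < besselI (ν-1) t := besselI_pos (by linarith) ht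
  have hdu : HasDerivAt (fun y => besselI ν y)
      (ν/t * besselI ν t + besselI (ν+1) t) t := hasDerivAt_besselI (by linarith) ht
  have hdv : HasDerivAt (fun y => besselI (ν-1) y)
      ((ν-1)/t * besselI (ν-1) t + besselI ν t) t := by
    have := hasDerivAt_besselI (ν := ν-1) (by linarith) ht
    rwa [show ν-1+1 = ν by ring] at this
  have hdiv := hdu.div hdv (ne_of_gt hv)
  have heq : ((ν/t * besselI ν t + besselI (ν+1) t) * besselI (ν-1) t
        - besselI ν t * ((ν-1)/t * besselI (ν-1) t + besselI ν t)) / besselI (ν-1) t ^ 2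
      = 1 - besselRatio ν t ^ 2 - ((2*ν-1)/t) * besselRatio ν t := by
    have hrec := besselI_rec (by linarith : (0:ℝ) < ν) ht
    have hw : besselI (ν+1) t = besselI (ν-1) t - (2*ν/t) * besselI ν t := by linarith
    unfold besselRatio
    rw [hw]
    field_simp
    ring
  rw [← heq]
  exact hdiv

lemma besselRatio_deriv_pos {ν t : ℝ} (hν : 1/2 ≤ ν) (ht : 0 < t) :
    0 < 1 - besselRatio ν t ^ 2 - ((2*ν-1)/t) * besselRatio ν t := by
  have ht2 : (0:ℝ) < t/2 := by linarith
  have hx : (0:ℝ) < t^2/4 := by positivity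
  have hg0 : 0 < besselG ν (t^2/4) := besselG_pos (by linarith) hx.le
  have hg1 : 0 < besselG (ν+1) (t^2/4) := besselG_pos (by linarith) hx.le
  have hrec := besselG_rec (by linarith : (0:ℝ) < ν) (t^2/4)
  have hW := besselG_W_pos hν hx
  have heq : (1 - besselRatio ν t ^ 2 - ((2*ν-1)/t) * besselRatio ν t) * besselG ν (t^2/4) ^ 2
      = 1/2 * (besselG (ν+1) (t^2/4) * besselG ν (t^2/4))
        + (t^2/4) * (besselG (ν+2) (t^2/4) * besselG ν (t^2/4))
        - (t^2/4) * besselG (ν+1) (t^2/4) ^ 2 := by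
    rw [besselRatio_eq hν ht]
    have hE1 : (1 - ((t/2) * besselG (ν+1) (t^2/4) / besselG ν (t^2/4)) ^ 2
          - ((2*ν-1)/t) * ((t/2) * besselG (ν+1) (t^2/4) / besselG ν (t^2/4)))
          * besselG ν (t^2/4) ^ 2
        = besselG ν (t^2/4) ^ 2 - (t^2/4) * besselG (ν+1) (t^2/4) ^ 2
          - (ν - 1/2) * (besselG (ν+1) (t^2/4) * besselG ν (t^2/4)) := by
      field_simp
      ring
    rw [hE1]
    linear_combination besselG ν (t^2/4) * hrec
  nlinarith [pow_pos hg0 2]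

lemma besselRatio_strictMonoOn {ν : ℝ} (hν : 1/2 ≤ ν) :
    StrictMonoOn (besselRatio ν) (Ioi 0) := by
  apply strictMonoOn_of_deriv_pos (convex_Ioi 0)
  · exact fun s hs => (hasDerivAt_besselRatio hν hs).continuousAt.continuousWithinAt
  · intro s hs
    rw [interior_Ioi] at hs
    rw [(hasDerivAt_besselRatio hν hs).deriv]
    exact besselRatio_deriv_pos hν hs

lemma besselRatio_surj {ν : ℝ} (hν : 1/2 ≤ ν) {y : ℝ} (hy : y ∈ Ioo (0:ℝ) 1) :
    ∃ s ∈ Ioi (0:ℝ), besselRatio ν s = y := by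
  obtain ⟨hy0, hy1⟩ := hy
  have hν0 : (0:ℝ) < ν := by linarith
  set b := (2*ν*y+1)/(1-y) with hb
  have hb0 : 0 < b := div_pos (by nlinarith) (by linarith)
  have hb1 : 1 ≤ b := by
    rw [le_div_iff₀ (by linarith)]
    nlinarith
  have hyb : y ≤ b := by linarith
  have hbelow : besselRatio ν y < y := by
    have h1 := besselRatio_upper hν hy0
    have h2 : y/(2*ν) ≤ y := by
      rw [div_le_iff₀ (by linarith)]
      nlinarith
    linarith
  have habove : y < besselRatio ν b := by
    have h1 := besselRatio_lower hν hb0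
    have h2 : y < b/(2*ν+b) := by
      rw [lt_div_iff₀ (by linarith)]
      have : b * (1-y) = 2*ν*y+1 := by
        rw [hb, div_mul_cancel₀ _ (by linarith : (1:ℝ)-y ≠ 0)]
      nlinarith
    linarith
  have hcont : ContinuousOn (besselRatio ν) (Icc y b) := by
    intro s hs
    exact (hasDerivAt_besselRatio hν (lt_of_lt_of_le hy0 hs.1)).continuousAt.continuousWithinAt
  have hivt := intermediate_value_Icc hyb hcont
  have hmem : y ∈ Icc (besselRatio ν y) (besselRatio ν b) := ⟨hbelow.le, habove.le⟩
  obtain ⟨s, hs, hfs⟩ := hivt hmem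
  exact ⟨s, lt_of_lt_of_le hy0 hs.1, hfs⟩

lemma besselRatioInv_pos {ν : ℝ} (hν : 1/2 ≤ ν) {y : ℝ} (hy : y ∈ Ioo (0:ℝ) 1) :
    0 < besselRatioInv ν y :=
  Function.invFunOn_mem (besselRatio_surj hν hy)

lemma besselRatio_besselRatioInv {ν : ℝ} (hν : 1/2 ≤ ν) {y : ℝ} (hy : y ∈ Ioo (0:ℝ) 1) :
    besselRatio ν (besselRatioInv ν y) = y :=
  Function.invFunOn_eq (besselRatio_surj hν hy)

lemma continuousAt_besselRatioInv {ν : ℝ} (hν : 1/2 ≤ ν) {t : ℝ} (ht : t ∈ Ioo (0:ℝ) 1) :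
    ContinuousAt (besselRatioInv ν) t := by
  set s := besselRatioInv ν t with hsdef
  have hs : 0 < s := besselRatioInv_pos hν ht
  have hfs : besselRatio ν s = t := besselRatio_besselRatioInv hν ht
  rw [Metric.continuousAt_iff]
  intro ε hε
  set ε' := min (ε/2) (s/2) with hε'def
  have hε' : 0 < ε' := lt_min (by linarith) (by linarith)
  have hε'2 : ε' ≤ s/2 := min_le_right _ _
  have hε'1 : ε' ≤ ε/2 := min_le_left _ _
  have hs1 : 0 < s - ε' := by linarith
  have hs2 : 0 < s + ε' := by linarith
  have hlo : besselRatio ν (s - ε') < t := by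
    rw [← hfs]
    exact besselRatio_strictMonoOn hν hs1 hs (by linarith)
  have hhi : t < besselRatio ν (s + ε') := by
    rw [← hfs]
    exact besselRatio_strictMonoOn hν hs hs2 (by linarith)
  have hnhds : Ioo (besselRatio ν (s - ε')) (besselRatio ν (s + ε')) ∈ 𝓝 t :=
    Ioo_mem_nhds hlo hhi
  obtain ⟨δ, hδ0, hδ⟩ := Metric.mem_nhds_iff.mp hnhds
  refine ⟨δ, hδ0, fun {y} hy => ?_⟩
  have hyI : y ∈ Ioo (besselRatio ν (s - ε')) (besselRatio ν (s + ε')) :=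
    hδ (by simpa [Metric.mem_ball] using hy)
  have hy01 : y ∈ Ioo (0:ℝ) 1 :=
    ⟨lt_trans (besselRatio_pos hν hs1) hyI.1, lt_trans hyI.2 (besselRatio_lt_one hν hs2)⟩
  have hgy : 0 < besselRatioInv ν y := besselRatioInv_pos hν hy01
  have hfgy : besselRatio ν (besselRatioInv ν y) = y := besselRatio_besselRatioInv hν hy01
  have hlt1 : s - ε' < besselRatioInv ν y := by
    have := hyI.1
    rw [← hfgy] at this
    exact ((besselRatio_strictMonoOn hν).lt_iff_lt hs1 hgy).mp this
  have hlt2 : besselRatioInv ν y < s + ε' := by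
    have := hyI.2
    rw [← hfgy] at this
    exact ((besselRatio_strictMonoOn hν).lt_iff_lt hgy hs2).mp this
  rw [Real.dist_eq, abs_lt]
  constructor <;> [linarith; linarith]

lemma hasDerivAt_besselRatioInv {ν : ℝ} (hν : 1/2 ≤ ν) {t : ℝ} (ht : t ∈ Ioo (0:ℝ) 1) :
    HasDerivAt (besselRatioInv ν)
      (1 - besselRatio ν (besselRatioInv ν t) ^ 2
        - ((2*ν-1)/(besselRatioInv ν t)) * besselRatio ν (besselRatioInv ν t))⁻¹ t := by
  have hs : 0 < besselRatioInv ν t := besselRatioInv_pos hν ht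
  apply HasDerivAt.of_local_left_inverse (continuousAt_besselRatioInv hν ht)
    (hasDerivAt_besselRatio hν hs) (ne_of_gt (besselRatio_deriv_pos hν hs))
  filter_upwards [Ioo_mem_nhds ht.1 ht.2] with y hy
  exact besselRatio_besselRatioInv hν hy

lemma hasDerivAt_xiFun {ν s : ℝ} (hν : 1/2 ≤ ν) (hs : 0 < s) :
    HasDerivAt (xiFun ν)
      (-s * (1 - besselRatio ν s ^ 2 - ((2*ν-1)/s) * besselRatio ν s)) s := by
  have hI : 0 < besselI (ν-1) s := besselI_pos (by linarith) hs
  have hu : 0 < besselI ν s := besselI_pos (by linarith) hs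
  have hc : (0:ℝ) < (2*π)^ν := Real.rpow_pos_of_pos (by positivity) ν
  have hP : (0:ℝ) < s ^ (ν-1) := Real.rpow_pos_of_pos hs _
  have hF := hasDerivAt_besselRatio hν hs
  have hmul : HasDerivAt (fun y : ℝ => -y * besselRatio ν y)
      ((-1) * besselRatio ν s
        + (-s) * (1 - besselRatio ν s ^ 2 - ((2*ν-1)/s) * besselRatio ν s)) s :=
    ((hasDerivAt_id s).neg).mul hF
  have hdI : HasDerivAt (fun y => besselI (ν-1) y)
      ((ν-1)/s * besselI (ν-1) s + besselI ν s) s := by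
    have := hasDerivAt_besselI (ν := ν-1) (by linarith) hs
    rwa [show ν-1+1 = ν by ring] at this
  have hdcI : HasDerivAt (fun y => (2*π)^ν * besselI (ν-1) y)
      ((2*π)^ν * ((ν-1)/s * besselI (ν-1) s + besselI ν s)) s := hdI.const_mul _
  have hpow : HasDerivAt (fun y : ℝ => y ^ (ν-1)) ((ν-1) * s ^ (ν-1-1)) s :=
    Real.hasDerivAt_rpow_const (Or.inl (ne_of_gt hs))
  have hdiv := hdcI.div hpow (ne_of_gt hP)
  have hA : (0:ℝ) < (2*π)^ν * besselI (ν-1) s / s^(ν-1) := by positivity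
  have hlog := hdiv.log (ne_of_gt hA)
  have hkey : ((2*π)^ν * ((ν-1)/s * besselI (ν-1) s + besselI ν s) * s^(ν-1)
        - (2*π)^ν * besselI (ν-1) s * ((ν-1) * s^(ν-1-1))) / (s^(ν-1))^2
        / ((2*π)^ν * besselI (ν-1) s / s^(ν-1))
      = besselRatio ν s := by
    have hPs : s ^ (ν-1-1) = s^(ν-1) / s := by
      rw [show ν-1-1 = (ν-1) + (-1) by ring, Real.rpow_add hs, Real.rpow_neg_one]
      ring
    unfold besselRatio
    rw [hPs]
    field_simp
    ring
  have hsum := hmul.add hlog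
  have : HasDerivAt (xiFun ν)
      ((-1) * besselRatio ν s
        + (-s) * (1 - besselRatio ν s ^ 2 - ((2*ν-1)/s) * besselRatio ν s)
        + ((2*π)^ν * ((ν-1)/s * besselI (ν-1) s + besselI ν s) * s^(ν-1)
          - (2*π)^ν * besselI (ν-1) s * ((ν-1) * s^(ν-1-1))) / (s^(ν-1))^2
          / ((2*π)^ν * besselI (ν-1) s / s^(ν-1))) s := hsum
  rw [hkey] at this
  have heq : (-1) * besselRatio ν s
        + (-s) * (1 - besselRatio ν s ^ 2 - ((2*ν-1)/s) * besselRatio ν s)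
        + besselRatio ν s
      = -s * (1 - besselRatio ν s ^ 2 - ((2*ν-1)/s) * besselRatio ν s) := by ring
  rwa [heq] at this


end BesselAux

/-- **Lemma (derivative of `h_ν`).** For `ν ≥ 1/2`, `h_ν` is differentiable on `(0,1)` with
derivative `-f_ν⁻¹(t)` at every `t ∈ (0,1)`. -/
theorem hasDerivAt_hFun (ν : ℝ) (hν : 1 / 2 ≤ ν) (t : ℝ) (ht : t ∈ Set.Ioo (0:ℝ) 1) :
    HasDerivAt (hFun ν) (-(besselRatioInv ν t)) t := by
  have hs : 0 < besselRatioInv ν t := besselRatioInv_pos hν ht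
  have hxi := hasDerivAt_xiFun hν hs
  have hinv := hasDerivAt_besselRatioInv hν ht
  have hcomp := hxi.comp t hinv
  have hD := besselRatio_deriv_pos hν hs
  have : (-(besselRatioInv ν t) * (1 - besselRatio ν (besselRatioInv ν t) ^ 2
        - ((2*ν-1)/(besselRatioInv ν t)) * besselRatio ν (besselRatioInv ν t)))
      * (1 - besselRatio ν (besselRatioInv ν t) ^ 2
        - ((2*ν-1)/(besselRatioInv ν t)) * besselRatio ν (besselRatioInv ν t))⁻¹
      = -(besselRatioInv ν t) := by
    rw [mul_assoc, mul_inv_cancel₀ (ne_of_gt hD), mul_one]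
  rw [this] at hcomp
  exact hcomp

end
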